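/- arXiv:0911.0085 — 3 statements merged into one kernel-verified Lean document; each statement's English description precedes it below -/
import Mathlib

section
/- Let p be a prime, S a finite p-group, and X a finite bifree (S,S)-biset with |X|/|S| prime to p, such that Pre-Fix(X) is level-wise closed. Fix P ≤ S and assume |X^{(P,φ)}| = |X^{(P,ψ)}| for all φ, ψ ∈ Hom_{Pre-Fix(X)}(P,S). Then for every φ ∈ Hom_{Pre-Fix(X)}(P,S): (a) φ(P) is fully Pre-Fix(X)-centralized if and only if |X^{(P,φ)}|/|C_S(φ(P))| is not divisible by p; and (b) Σ_{ψ ∈ Hom_{Pre-Fix(X)}(P,φ(P))} |X^{(P,ψ)}| = |Aut_{Pre-Fix(X)}(φ(P))| · |X^{(P,φ)}|, and φ(P) is fully Pre-Fix(X)-normalized if and only if |Aut_{Pre-Fix(X)}(φ(P))| · |X^{(P,φ)}| / |N_S(φ(P))| is not divisible by p. -/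
/-! ## Bisets -/

/-- A `(G,H)`-biset structure on a type `X`: a left `H`-action and a right `G`-action
that commute with each other. -/
structure BisetAction (G H : Type*) [Group G] [Group H] (X : Type*) where
  /-- the left `H`-action -/
  smul : H → X → X
  /-- the right `G`-action -/
  rmul : X → G → X
  one_smul : ∀ x, smul 1 x = x
  mul_smul : ∀ h₁ h₂ x, smul (h₁ * h₂) x = smul h₁ (smul h₂ x)
  rmul_one : ∀ x, rmul x 1 = x
  rmul_mul : ∀ x g₁ g₂, rmul x (g₁ * g₂) = rmul (rmul x g₁) g₂
  smul_rmul : ∀ h x g, rmul (smul h x) g = smul h (rmul x g)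

namespace BisetAction

variable {G H K : Type*} [Group G] [Group H] [Group K] {X Y Z : Type*}

lemma smul_smul (A : BisetAction G H X) (h₁ h₂ : H) (x : X) :
    A.smul h₁ (A.smul h₂ x) = A.smul (h₁ * h₂) x := (A.mul_smul h₁ h₂ x).symm

lemma rmul_rmul (A : BisetAction G H X) (x : X) (g₁ g₂ : G) :
    A.rmul (A.rmul x g₁) g₂ = A.rmul x (g₁ * g₂) := (A.rmul_mul x g₁ g₂).symm

/-- The biset is left-free. -/
def LeftFree (A : BisetAction G H X) : Prop := ∀ (h : H) (x : X), A.smul h x = x → h = 1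

/-- The biset is right-free. -/
def RightFree (A : BisetAction G H X) : Prop := ∀ (g : G) (x : X), A.rmul x g = x → g = 1

/-- The biset is bifree: both actions are free. -/
def Bifree (A : BisetAction G H X) : Prop := A.LeftFree ∧ A.RightFree

/-- The fixed-point set `X^{(P,φ)} = {x | x·u = φ(u)·x for all u ∈ P}`. -/
def Fix (A : BisetAction G H X) (P : Subgroup G) (φ : P →* H) : Set X :=
  {x | ∀ u : P, A.rmul x u = A.smul (φ u) x}

/-- The opposite biset: same underlying set, with the two actions reversed
(`g·x·h` in `op A` is `h⁻¹·x·g⁻¹` in `A`). -/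
def op (A : BisetAction G H X) : BisetAction H G X where
  smul g x := A.rmul x g⁻¹
  rmul x h := A.smul h⁻¹ x
  one_smul x := by simpa using A.rmul_one x
  mul_smul g₁ g₂ x := by rw [mul_inv_rev, A.rmul_mul]
  rmul_one x := by simpa using A.one_smul x
  rmul_mul x h₁ h₂ := by rw [mul_inv_rev, A.mul_smul]
  smul_rmul g x h := (A.smul_rmul h⁻¹ x g⁻¹).symm

/-- The setoid of left `H`-orbits. -/
def leftOrbitSetoid (A : BisetAction G H X) : Setoid X where
  r x y := ∃ h : H, y = A.smul h x
  iseqv := by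
    refine ⟨fun x => ⟨1, (A.one_smul x).symm⟩, ?_, ?_⟩
    · rintro x y ⟨h, rfl⟩
      exact ⟨h⁻¹, by rw [A.smul_smul, inv_mul_cancel, A.one_smul]⟩
    · rintro x y z ⟨h₁, rfl⟩ ⟨h₂, rfl⟩
      exact ⟨h₂ * h₁, A.smul_smul h₂ h₁ x⟩

/-- The set of left `H`-orbits of the biset. -/
def leftOrbits (A : BisetAction G H X) : Type _ := Quotient (A.leftOrbitSetoid)

/-- Restricting the right action along a homomorphism `φ : P →* G`. -/
def restrictRight (A : BisetAction G H X) {P : Type*} [Group P] (φ : P →* G) :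
    BisetAction P H X where
  smul := A.smul
  rmul x u := A.rmul x (φ u)
  one_smul := A.one_smul
  mul_smul := A.mul_smul
  rmul_one x := by rw [map_one, A.rmul_one]
  rmul_mul x u₁ u₂ := by rw [map_mul, A.rmul_mul]
  smul_rmul h x u := A.smul_rmul h x (φ u)

/-- Restricting the left action along a homomorphism `φ : P →* H`. -/
def restrictLeft (A : BisetAction G H X) {P : Type*} [Group P] (φ : P →* H) :
    BisetAction G P X where
  smul u x := A.smul (φ u) x
  rmul := A.rmul
  one_smul x := by rw [map_one, A.one_smul]
  mul_smul u₁ u₂ x := by rw [map_mul, A.mul_smul]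
  rmul_one := A.rmul_one
  rmul_mul := A.rmul_mul
  smul_rmul u x g := A.smul_rmul (φ u) x g

end BisetAction

/-- An isomorphism of `(G,H)`-bisets: an equivalence of underlying sets commuting with
both actions. -/
structure BisetIso {G H : Type*} [Group G] [Group H] {X Y : Type*}
    (A : BisetAction G H X) (B : BisetAction G H Y) extends X ≃ Y where
  map_smul : ∀ (h : H) (x : X), toEquiv (A.smul h x) = B.smul h (toEquiv x)
  map_rmul : ∀ (x : X) (g : G), toEquiv (A.rmul x g) = B.rmul (toEquiv x) g

/-! ## Collections of morphisms between subgroups -/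

section Collections

variable {S : Type*} [Group S]

/-- The conjugation homomorphism `P →* S`, `u ↦ s * u * s⁻¹`. -/
def conjHom (s : S) (P : Subgroup S) : P →* S :=
  (MulAut.conj s).toMonoidHom.comp P.subtype

/-- A "collection" of morphism sets on the poset of subgroups of `S`:
for each pair of subgroups `P Q ≤ S` a set of group homomorphisms `P →* S`
(to be thought of as morphisms from `P` to `Q`, i.e. maps landing in `Q`). -/
abbrev Collection (S : Type*) [Group S] :=
  ∀ (P : Subgroup S), Subgroup S → Set (P →* S)

namespace Collection

/-- `P` and `Q` are conjugate in the collection `C` if some morphism of `C`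
restricts to an isomorphism from `P` onto `Q`. -/
def IsConj (C : Collection S) (P Q : Subgroup S) : Prop :=
  ∃ φ ∈ C P Q, MonoidHom.range φ = Q

/-- `P` is fully centralized: its centralizer has maximal order in its conjugacy class. -/
def FullyCentralized (C : Collection S) (P : Subgroup S) : Prop :=
  ∀ Q : Subgroup S, C.IsConj P Q →
    Nat.card (Subgroup.centralizer (Q : Set S)) ≤ Nat.card (Subgroup.centralizer (P : Set S))

/-- `P` is fully normalized: its normalizer has maximal order in its conjugacy class. -/
def FullyNormalized (C : Collection S) (P : Subgroup S) : Prop :=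
  ∀ Q : Subgroup S, C.IsConj P Q → Nat.card (Subgroup.normalizer (Q : Set S)) ≤ Nat.card (Subgroup.normalizer (P : Set S))

end Collection

/-- The set `Aut_S(P)` of automorphisms of `P` induced by conjugation by elements of the
normalizer `N_S(P)`, as a set of homomorphisms `P →* S`. -/
def autSSet (P : Subgroup S) : Set (P →* S) :=
  {φ | ∃ s ∈ Subgroup.normalizer (P : Set S), φ = conjHom s P}

/-- `Aut_S(P)` is a Sylow `p`-subgroup of `Aut_C(P) = C P P`:  `Aut_S(P)` is contained
in `Aut_C(P)`, has `p`-power order, and has index prime to `p` in `Aut_C(P)`. -/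
def Collection.AutSIsSylow (p : ℕ) (C : Collection S) (P : Subgroup S) : Prop :=
  autSSet P ⊆ C P P ∧ (∃ n : ℕ, Nat.card (autSSet P) = p ^ n) ∧
    ∃ k : ℕ, ¬ p ∣ k ∧ Nat.card (C P P) = k * Nat.card (autSSet P)

/-- A collection is level-wise closed if it contains all conjugation maps induced by `S`,
the inverse of every isomorphism it contains, and all composites of composable
isomorphisms it contains. -/
def LevelwiseClosed (C : Collection S) : Prop :=
  (∀ (P Q : Subgroup S) (s : S), (∀ u ∈ P, s * u * s⁻¹ ∈ Q) → conjHom s P ∈ C P Q) ∧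
  (∀ (P Q : Subgroup S), ∀ φ ∈ C P Q, MonoidHom.range φ = Q → ∀ ψ : Q →* S,
    (∀ (u : P) (hq : (φ u : S) ∈ Q), ψ ⟨φ u, hq⟩ = u) → ψ ∈ C Q P) ∧
  (∀ (P Q R : Subgroup S) (φ : P →* S), φ ∈ C P Q → ∀ ψ : Q →* S, ψ ∈ C Q R →
    ∀ hφ : MonoidHom.range φ = Q, MonoidHom.range ψ = R →
    ψ.comp (φ.codRestrict Q (fun u => hφ ▸ show φ u ∈ φ.range from ⟨u, rfl⟩)) ∈ C P R)

end Collections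

/-! ## The fixed-point pre-fusion system of a biset -/

/-- The pre-fusion collection `Pre-Fix(X)`: morphisms from `P` to `Q` are the injective
homomorphisms `φ : P → Q` with nonempty fixed-point set `X^{(P,φ)}`. -/
def preFixHom {S X : Type*} [Group S] (A : BisetAction S S X) : Collection S :=
  fun P Q => {φ | Function.Injective φ ∧ (∀ u : P, φ u ∈ Q) ∧ (A.Fix P φ).Nonempty}

/-!
Let `Z = {(ψ, x) | x ∈ X^{(P,ψ)}}`. Left-freeness makes `S` act freely on `Z` by
`s • (ψ, x) = (c_s ∘ ψ, s x)`, and `Z/S` is the set of fixed points of the `p`-group `P` acting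
on `X/S` from the right, so `|Z|/|S| ≡ |X|/|S| ≢ 0 (mod p)`.

The maps `(ψ, x) ↦ ψ` and `(ψ, x) ↦ ψ(P)` are `S`-equivariant, with stabilizers `C_S(ψ(P))` and
`N_S(ψ(P))`, and all their nonempty fibres are equally large: of size `c = |X^{(P,φ)}|` by
hypothesis, resp. `|Aut(φ(P))| · c` by level-wise closedness. The stabilizer of a point acts
freely on its fibre, so its order divides the fibre size, and summing over `S`-orbits gives
`|Z|/|S| = ∑ |fibre| / |stabilizer|`. Hence some stabilizer order is the full `p`-part of the
fibre size; as all stabilizer orders are powers of `p` dividing it, the maximal ones are exactly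
those with `p ∤ |fibre| / |stabilizer|`.
-/

namespace Nat

theorem not_dvd_div_pow_iff_eq_ordProj {p k n : ℕ} (hp : p.Prime) (hn : n ≠ 0)
    (hk : p ^ k ∣ n) : ¬ p ∣ n / p ^ k ↔ p ^ k = ordProj[p] n := by
  have hle := (hp.pow_dvd_iff_le_factorization hn).1 hk
  rw [Nat.dvd_div_iff_mul_dvd hk, ← pow_succ, hp.pow_dvd_iff_le_factorization hn,
    (Nat.pow_right_injective hp.two_le).eq_iff]
  omega

theorem forall_le_iff_not_dvd_div {ι : Type*} {p n : ℕ} (hp : p.Prime) (hn : n ≠ 0)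
    (d : ι → ℕ) (hpow : ∀ i, ∃ k, d i = p ^ k) (hd : ∀ i, d i ∣ n)
    (h : ∃ j, ¬ p ∣ n / d j) (i : ι) : (∀ j, d j ≤ d i) ↔ ¬ p ∣ n / d i := by
  have key (j : ι) : ¬ p ∣ n / d j ↔ d j = ordProj[p] n := by
    obtain ⟨k, hk⟩ := hpow j
    exact hk ▸ not_dvd_div_pow_iff_eq_ordProj hp hn (hk ▸ hd j)
  have hmax (j : ι) : d j ≤ ordProj[p] n := by
    obtain ⟨k, hk⟩ := hpow j
    exact hk ▸ Nat.pow_le_pow_right hp.pos ((hp.pow_dvd_iff_le_factorization hn).1 (hk ▸ hd j))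
  obtain ⟨j₀, hj₀⟩ := h
  rw [key] at hj₀ ⊢
  exact ⟨fun hle => le_antisymm (hmax i) (hj₀ ▸ hle j₀), fun hi j => hi ▸ hmax j⟩

end Nat

section FreeActions

open MulAction

variable {G Y T : Type*} [Group G] [MulAction G Y] [MulAction G T]

theorem card_dvd_card_of_free [Finite Y] (hfree : ∀ (g : G) (y : Y), g • y = y → g = 1) :
    Nat.card G ∣ Nat.card Y := by
  have hstab (y : Y) : stabilizer G y = ⊥ :=
    (Subgroup.eq_bot_iff_forall _).2 fun g hg => hfree g y hg
  rw [Nat.card_congr (selfEquivOrbitsQuotientProd hstab), Nat.card_prod]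
  exact dvd_mul_left _ _

theorem card_orbit_mul_card_stabilizer (t : T) :
    Nat.card (orbit G t) * Nat.card (stabilizer G t) = Nat.card G := by
  rw [Nat.card_coe_set_eq, ← index_stabilizer, Subgroup.index_mul_card]

def MulActionHom.fiberSubMulAction (f : Y →[G] T) (t : T) :
    SubMulAction (stabilizer G t) Y where
  carrier := f ⁻¹' {t}
  smul_mem' g y (hy : f y = t) := by
    show f ((g : G) • y) = t
    rw [map_smul, hy, g.2]

theorem card_stabilizer_dvd_card_fiber [Finite Y]
    (hfree : ∀ (g : G) (y : Y), g • y = y → g = 1) (f : Y →[G] T) (t : T) :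
    Nat.card (stabilizer G t) ∣ Nat.card (f ⁻¹' {t}) :=
  card_dvd_card_of_free (Y := f.fiberSubMulAction t) fun g y h =>
    Subtype.ext (hfree g y (congrArg Subtype.val h))

theorem card_fiber_smul (f : Y →[G] T) (g : G) (t : T) :
    Nat.card (f ⁻¹' {g • t}) = Nat.card (f ⁻¹' {t}) :=
  Nat.card_congr <| ((MulAction.toPerm g).subtypeEquiv fun y => by
    simp [map_smul, smul_left_cancel_iff]).symm

theorem exists_not_dvd_card_fiber_div [Finite G] [Finite Y] [Finite T] {p : ℕ}
    (hfree : ∀ (g : G) (y : Y), g • y = y → g = 1) (f : Y →[G] T)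
    (hY : ¬ p ∣ Nat.card Y / Nat.card G) :
    ∃ t, ¬ p ∣ Nat.card (f ⁻¹' {t}) / Nat.card (stabilizer G t) := by
  classical
  have := Fintype.ofFinite T
  contrapose! hY
  have hsum : Nat.card Y = Nat.card G * ∑ ω : orbitRel.Quotient G T,
      Nat.card (f ⁻¹' {ω.out}) / Nat.card (stabilizer G ω.out) := by
    rw [← Nat.card_congr (Equiv.sigmaFiberEquiv f), Nat.card_sigma,
      ← (selfEquivSigmaOrbits G T).symm.sum_comp, Fintype.sum_sigma, Finset.mul_sum]
    refine Finset.sum_congr rfl fun ω _ => ?_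
    have hfib (t : orbit G ω.out) : Nat.card (f ⁻¹' {t.1}) = Nat.card (f ⁻¹' {ω.out}) := by
      obtain ⟨g, hg⟩ := t.2
      rw [← hg, card_fiber_smul]
    calc _ = ∑ _t : orbit G ω.out, Nat.card (f ⁻¹' {ω.out}) :=
          Finset.sum_congr rfl fun t _ => hfib t
      _ = _ := by
        rw [Finset.sum_const, Finset.card_univ, ← Nat.card_eq_fintype_card, smul_eq_mul,
          ← card_orbit_mul_card_stabilizer (G := G) ω.out, mul_assoc,
          Nat.mul_div_cancel' (card_stabilizer_dvd_card_fiber hfree f _)]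
  rw [hsum, Nat.mul_div_cancel_left _ Nat.card_pos]
  exact Finset.dvd_sum fun ω _ => hY ω.out

theorem forall_card_stabilizer_le_iff_not_dvd [Finite G] [Finite Y] [Finite T] {p : ℕ}
    (hp : p.Prime) (hG : IsPGroup p G) (hfree : ∀ (g : G) (y : Y), g • y = y → g = 1)
    (f : Y →[G] T) (hY : ¬ p ∣ Nat.card Y / Nat.card G) {c : ℕ}
    (hc : ∀ y, Nat.card (f ⁻¹' {f y}) = c) (y : Y) :
    (∀ y', Nat.card (stabilizer G (f y')) ≤ Nat.card (stabilizer G (f y))) ↔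
      ¬ p ∣ c / Nat.card (stabilizer G (f y)) := by
  have := Fact.mk hp
  have hc₀ : c ≠ 0 := hc y ▸ Nat.card_ne_zero.2 ⟨⟨⟨y, rfl⟩⟩, inferInstance⟩
  refine Nat.forall_le_iff_not_dvd_div hp hc₀ (fun y => Nat.card (stabilizer G (f y)))
    (fun y => IsPGroup.iff_card.1 (hG.to_subgroup _))
    (fun y => hc y ▸ card_stabilizer_dvd_card_fiber hfree f (f y)) ?_ y
  obtain ⟨t, ht⟩ := exists_not_dvd_card_fiber_div hfree f hY
  obtain ⟨y₀, rfl⟩ : ∃ y₀, f y₀ = t := by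
    by_contra! hne
    have : IsEmpty (f ⁻¹' {t}) := ⟨fun y => hne y.1 y.2⟩
    exact ht (by simp [Nat.card_of_isEmpty])
  exact ⟨y₀, hc y₀ ▸ ht⟩

end FreeActions

theorem MonoidHom.codRestrict_surjective {M G : Type*} [Group M] [Group G] {φ : M →* G}
    {Q : Subgroup G} (hφ : φ.range = Q) (h : ∀ m, φ m ∈ Q) :
    Function.Surjective (φ.codRestrict Q h) := by
  rintro ⟨q, hq⟩
  obtain ⟨m, rfl⟩ := hφ ▸ hq
  exact ⟨m, rfl⟩

theorem MonoidHom.range_comp_codRestrict {M G N : Type*} [Group M] [Group G] [Group N]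
    {φ : M →* G} {Q : Subgroup G} (ψ : Q →* N) (hφ : φ.range = Q) (h : ∀ m, φ m ∈ Q) :
    (ψ.comp (φ.codRestrict Q h)).range = ψ.range := by
  rw [MonoidHom.range_comp, MonoidHom.range_eq_top.2 (codRestrict_surjective hφ h),
    ← MonoidHom.range_eq_map]

instance MonoidHom.finite {M N : Type*} [MulOneClass M] [MulOneClass N] [Finite M] [Finite N] :
    Finite (M →* N) :=
  Finite.of_injective _ DFunLike.coe_injective

@[reducible] def MonoidHom.conjMulAction {S M : Type*} [Group S] [Group M] :
    MulAction S (M →* S) where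
  smul s ψ := (MulAut.conj s : S →* S).comp ψ
  one_smul ψ := MonoidHom.ext fun m => show 1 * ψ m * 1⁻¹ = ψ m by group
  mul_smul s t ψ := MonoidHom.ext fun m =>
    show s * t * ψ m * (s * t)⁻¹ = s * (t * ψ m * t⁻¹) * s⁻¹ by group

@[reducible] def Subgroup.conjMulAction {S : Type*} [Group S] : MulAction S (Subgroup S) where
  smul s R := R.map (MulAut.conj s : S →* S)
  one_smul R := Subgroup.ext fun x =>
    show x ∈ R.map (MulAut.conj (1 : S) : S →* S) ↔ x ∈ R by simp
  mul_smul s t R := Subgroup.ext fun x =>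
    show x ∈ R.map (MulAut.conj (s * t) : S →* S) ↔
      x ∈ (R.map (MulAut.conj t : S →* S)).map (MulAut.conj s : S →* S) by
    simp [Subgroup.mem_map, mul_assoc]

attribute [local instance] MonoidHom.conjMulAction Subgroup.conjMulAction

section Conjugation

open MulAction

variable {S M : Type*} [Group S] [Group M]

theorem conj_smul_apply (s : S) (ψ : M →* S) (m : M) : (s • ψ) m = s * ψ m * s⁻¹ := rfl

theorem range_conj_smul (s : S) (ψ : M →* S) : (s • ψ).range = s • ψ.range :=
  MonoidHom.range_comp (MulAut.conj s : S →* S) ψ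

theorem stabilizer_hom_eq_centralizer (ψ : M →* S) :
    stabilizer S ψ = Subgroup.centralizer (ψ.range : Set S) := by
  ext s
  simp only [mem_stabilizer_iff, Subgroup.mem_centralizer_iff, MonoidHom.coe_range,
    Set.forall_mem_range, MonoidHom.ext_iff, conj_smul_apply]
  exact forall_congr' fun m => by rw [mul_inv_eq_iff_eq_mul, eq_comm]

theorem stabilizer_subgroup_eq_normalizer (R : Subgroup S) :
    stabilizer S R = Subgroup.normalizer (R : Set S) := by
  ext s
  exact (Subgroup.mem_normalizer_iff_map_conj_eq (H := R)).symm

end Conjugation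

namespace BisetAction

open MulAction

section Orbits

variable {G H X : Type*} [Group G] [Group H] (A : BisetAction G H X)

theorem eq_of_smul_eq_smul (hA : A.LeftFree) {h₁ h₂ : H} {x : X}
    (h : A.smul h₁ x = A.smul h₂ x) : h₁ = h₂ := by
  have : A.smul (h₂⁻¹ * h₁) x = x := by
    rw [A.mul_smul, h, A.smul_smul, inv_mul_cancel, A.one_smul]
  exact (inv_mul_eq_one.mp (hA _ _ this)).symm

theorem eq_of_mem_fix_of_mem_fix (hA : A.LeftFree) {P : Subgroup G} {ψ₁ ψ₂ : P →* H} {x : X}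
    (h₁ : x ∈ A.Fix P ψ₁) (h₂ : x ∈ A.Fix P ψ₂) : ψ₁ = ψ₂ :=
  MonoidHom.ext fun u => A.eq_of_smul_eq_smul hA ((h₁ u).symm.trans (h₂ u))

theorem injective_of_mem_fix (hA : A.RightFree) {P : Subgroup G} {ψ : P →* H} {x : X}
    (hx : x ∈ A.Fix P ψ) : Function.Injective ψ := by
  refine (injective_iff_map_eq_one ψ).2 fun u hu => Subtype.ext (hA u x ?_)
  rw [hx u, hu, A.one_smul]

theorem exists_mem_fix_iff (hA : A.LeftFree) {P : Subgroup G} {x : X} :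
    (∃ ψ : P →* H, x ∈ A.Fix P ψ) ↔ ∀ u : P, ∃ h, A.rmul x u = A.smul h x := by
  refine ⟨fun ⟨ψ, hx⟩ u => ⟨ψ u, hx u⟩, fun hx => ?_⟩
  choose ψ hψ using hx
  refine ⟨{ toFun := ψ, map_one' := ?_, map_mul' := fun u v => ?_ }, hψ⟩
  · exact A.eq_of_smul_eq_smul hA (by rw [← hψ, OneMemClass.coe_one, A.rmul_one, A.one_smul])
  · refine A.eq_of_smul_eq_smul hA (x := x) ?_
    rw [← hψ, Subgroup.coe_mul, A.rmul_mul, hψ u, A.smul_rmul, hψ v, A.smul_smul]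

instance : MulAction G A.leftOrbits where
  smul g := Quotient.map (fun x => A.rmul x g⁻¹) fun _ _ ⟨h, hy⟩ => ⟨h, by rw [hy, A.smul_rmul]⟩
  one_smul := Quotient.ind fun x =>
    congrArg (Quotient.mk _) (show A.rmul x 1⁻¹ = x by rw [inv_one, A.rmul_one])
  mul_smul g₁ g₂ := Quotient.ind fun x => congrArg (Quotient.mk _)
    (show A.rmul x (g₁ * g₂)⁻¹ = A.rmul (A.rmul x g₂⁻¹) g₁⁻¹ by rw [mul_inv_rev, A.rmul_mul])

instance [Finite X] : Finite A.leftOrbits := Quotient.finite _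

def leftOrbit (x : X) : A.leftOrbits := Quotient.mk _ x

theorem leftOrbit_eq_leftOrbit_iff {x y : X} :
    A.leftOrbit x = A.leftOrbit y ↔ ∃ h, y = A.smul h x :=
  Quotient.eq

theorem leftOrbit_smul (h : H) (x : X) : A.leftOrbit (A.smul h x) = A.leftOrbit x :=
  ((A.leftOrbit_eq_leftOrbit_iff).2 ⟨h, rfl⟩).symm

theorem smul_leftOrbit (g : G) (x : X) : g • A.leftOrbit x = A.leftOrbit (A.rmul x g⁻¹) := rfl

theorem card_leftOrbit_fiber (hA : A.LeftFree) (x₀ : X) :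
    Nat.card (A.leftOrbit ⁻¹' {A.leftOrbit x₀}) = Nat.card H := by
  refine (Nat.card_congr (Equiv.ofBijective
    (fun h => (⟨A.smul h x₀, A.leftOrbit_smul h x₀⟩ : A.leftOrbit ⁻¹' {A.leftOrbit x₀}))
    ⟨fun h₁ h₂ h => A.eq_of_smul_eq_smul hA (congrArg Subtype.val h), fun ⟨x, hx⟩ => ?_⟩)).symm
  obtain ⟨h, rfl⟩ := (A.leftOrbit_eq_leftOrbit_iff).1 hx.symm
  exact ⟨h, rfl⟩

theorem card_preimage_leftOrbit [Finite X] (hA : A.LeftFree) (O : Set A.leftOrbits) :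
    Nat.card (A.leftOrbit ⁻¹' O) = Nat.card O * Nat.card H := by
  classical
  have := Fintype.ofFinite O
  let q : A.leftOrbit ⁻¹' O → O := fun x => ⟨A.leftOrbit x, x.2⟩
  rw [← Nat.card_congr (Equiv.sigmaFiberEquiv q), Nat.card_sigma, Nat.card_eq_fintype_card,
    ← smul_eq_mul, ← Finset.card_univ, ← Finset.sum_const]
  refine Finset.sum_congr rfl fun ⟨o, ho⟩ _ => ?_
  obtain ⟨x₀, rfl⟩ := Quotient.mk_surjective o
  rw [← A.card_leftOrbit_fiber hA x₀]
  exact Nat.card_congr ((Equiv.subtypeEquivRight fun x => Subtype.ext_iff).trans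
    (Equiv.subtypeSubtypeEquivSubtype fun {x} (hx : A.leftOrbit x = A.leftOrbit x₀) =>
      show A.leftOrbit x ∈ O by rw [hx]; exact ho))

theorem card_eq_card_leftOrbits_mul [Finite X] (hA : A.LeftFree) :
    Nat.card X = Nat.card A.leftOrbits * Nat.card H := by
  rw [← Nat.card_univ, ← Set.preimage_univ (f := A.leftOrbit), A.card_preimage_leftOrbit hA,
    Nat.card_univ]

theorem leftOrbit_mem_fixedPoints_iff (hA : A.LeftFree) {P : Subgroup G} {x : X} :
    A.leftOrbit x ∈ fixedPoints P A.leftOrbits ↔ ∃ ψ : P →* H, x ∈ A.Fix P ψ := by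
  rw [A.exists_mem_fix_iff hA]
  refine ⟨fun hx u => ?_, fun hx u => ?_⟩
  · have hu : A.leftOrbit x = A.leftOrbit (A.rmul x u) := by
      simpa [Subgroup.smul_def, smul_leftOrbit] using (hx u⁻¹).symm
    obtain ⟨h, hh⟩ := (A.leftOrbit_eq_leftOrbit_iff).1 hu
    exact ⟨h, hh⟩
  · obtain ⟨h, hh⟩ := hx u⁻¹
    show A.leftOrbit (A.rmul x (u : G)⁻¹) = A.leftOrbit x
    rw [← Subgroup.coe_inv, hh, A.leftOrbit_smul]

end Orbits

section FixPairs

variable {S X : Type*} [Group S] (A : BisetAction S S X) {P : Subgroup S}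

theorem smul_mem_fix {ψ : P →* S} {x : X} (hx : x ∈ A.Fix P ψ) (s : S) :
    A.smul s x ∈ A.Fix P (s • ψ) := fun u => by
  rw [A.smul_rmul, hx u, A.smul_smul, A.smul_smul, conj_smul_apply, inv_mul_cancel_right]

theorem mem_preFixHom_top_iff (hA : A.RightFree) {ψ : P →* S} :
    ψ ∈ preFixHom A P ⊤ ↔ (A.Fix P ψ).Nonempty :=
  ⟨fun h => h.2.2, fun ⟨x, hx⟩ => ⟨A.injective_of_mem_fix hA hx, fun _ => trivial, x, hx⟩⟩

variable (P) in
def FixPairs : Type _ := {q : (P →* S) × X // q.2 ∈ A.Fix P q.1}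

instance [Finite S] [Finite X] : Finite (A.FixPairs P) := Subtype.finite

instance : MulAction S (A.FixPairs P) where
  smul s z := ⟨(s • z.1.1, A.smul s z.1.2), A.smul_mem_fix z.2 s⟩
  one_smul _ := Subtype.ext (Prod.ext (_root_.one_smul _ _) (A.one_smul _))
  mul_smul _ _ _ := Subtype.ext (Prod.ext (SemigroupAction.mul_smul _ _ _) (A.mul_smul _ _ _))

variable (P) in
def fixPairsHom : A.FixPairs P →[S] (P →* S) where
  toFun z := z.1.1
  map_smul' _ _ := rfl

variable (P) in
def fixPairsRange : A.FixPairs P →[S] Subgroup S where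
  toFun z := z.1.1.range
  map_smul' s z := range_conj_smul s z.1.1

theorem fixPairs_smul_eq_self (hA : A.LeftFree) (s : S) (z : A.FixPairs P) (h : s • z = z) :
    s = 1 :=
  hA s z.1.2 (congrArg (fun z : A.FixPairs P => z.1.2) h :)

theorem card_fixPairs [Finite X] (hA : A.LeftFree) :
    Nat.card (A.FixPairs P) = Nat.card (fixedPoints P A.leftOrbits) * Nat.card S := by
  rw [← A.card_preimage_leftOrbit hA]
  refine Nat.card_congr (Equiv.ofBijective
    (fun z => ⟨z.1.2, (A.leftOrbit_mem_fixedPoints_iff hA).2 ⟨_, z.2⟩⟩) ⟨?_, fun x => ?_⟩)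
  · rintro ⟨⟨ψ₁, x⟩, h₁⟩ ⟨⟨ψ₂, _⟩, h₂⟩ h
    obtain rfl : x = _ := congrArg Subtype.val h
    obtain rfl := A.eq_of_mem_fix_of_mem_fix hA h₁ h₂
    rfl
  · obtain ⟨ψ, hx⟩ := (A.leftOrbit_mem_fixedPoints_iff hA).1 x.2
    exact ⟨⟨(ψ, x), hx⟩, rfl⟩

theorem not_dvd_card_fixPairs_div [Finite S] [Finite X] {p : ℕ} (hp : p.Prime)
    (hS : IsPGroup p S) (hA : A.LeftFree) (hX : ¬ p ∣ Nat.card X / Nat.card S) :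
    ¬ p ∣ Nat.card (A.FixPairs P) / Nat.card S := by
  have := Fact.mk hp
  rw [A.card_eq_card_leftOrbits_mul hA, Nat.mul_div_cancel _ Nat.card_pos] at hX
  rwa [A.card_fixPairs hA, Nat.mul_div_cancel _ Nat.card_pos,
    ← ((hS.to_subgroup P).card_modEq_card_fixedPoints A.leftOrbits).dvd_iff dvd_rfl]

theorem card_fiber_fixPairsHom (ψ : P →* S) :
    Nat.card (A.fixPairsHom P ⁻¹' {ψ}) = Nat.card (A.Fix P ψ) :=
  Nat.card_congr
    { toFun := fun z =>
        ⟨z.1.1.2, Eq.subst (motive := fun χ => z.1.1.2 ∈ A.Fix P χ) (z.2 : z.1.1.1 = ψ) z.1.2⟩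
      invFun := fun x => ⟨⟨(ψ, x.1), x.2⟩, rfl⟩
      left_inv := by rintro ⟨⟨⟨_, _⟩, _⟩, rfl⟩; rfl
      right_inv := fun _ => rfl }

end FixPairs

section Conjugacy

variable {S X : Type*} [Group S] {A : BisetAction S S X}

theorem range_eq_of_mem_preFixHom [Finite S] {P R : Subgroup S} {ψ : P →* S}
    (hψ : ψ ∈ preFixHom A P R) (hR : Nat.card R ≤ Nat.card P) : ψ.range = R :=
  Subgroup.eq_of_le_of_card_ge (fun _ ⟨u, hu⟩ => hu ▸ hψ.2.1 u)
    (by rwa [← Nat.card_congr (MonoidHom.ofInjective hψ.1).toEquiv])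

theorem isConj_range {P : Subgroup S} {φ : P →* S} (hφ : φ ∈ preFixHom A P ⊤) :
    (preFixHom A).IsConj P φ.range :=
  ⟨φ, ⟨hφ.1, fun u => ⟨u, rfl⟩, hφ.2.2⟩, rfl⟩

theorem card_eq_of_isConj {Q R : Subgroup S} (h : (preFixHom A).IsConj Q R) :
    Nat.card Q = Nat.card R := by
  obtain ⟨θ, hθ, rfl⟩ := h
  exact Nat.card_congr (MonoidHom.ofInjective hθ.1).toEquiv

theorem isConj_trans (hlw : LevelwiseClosed (preFixHom A)) {P Q R : Subgroup S}
    (h₁ : (preFixHom A).IsConj P Q) (h₂ : (preFixHom A).IsConj Q R) :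
    (preFixHom A).IsConj P R := by
  obtain ⟨φ, hφ, hφr⟩ := h₁
  obtain ⟨ψ, hψ, hψr⟩ := h₂
  exact ⟨_, hlw.2.2 P Q R φ hφ ψ hψ hφr hψr, (MonoidHom.range_comp_codRestrict ψ hφr _).trans hψr⟩

theorem isConj_symm (hlw : LevelwiseClosed (preFixHom A)) {Q R : Subgroup S}
    (h : (preFixHom A).IsConj Q R) : (preFixHom A).IsConj R Q := by
  obtain ⟨θ, hθ, rfl⟩ := h
  let e := MonoidHom.ofInjective hθ.1
  refine ⟨Q.subtype.comp e.symm.toMonoidHom, hlw.2.1 Q _ θ hθ rfl _ fun u hq => ?_, ?_⟩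
  · show (e.symm ⟨θ u, hq⟩ : S) = u
    rw [e.symm_apply_eq.2 (Subtype.ext (MonoidHom.ofInjective_apply hθ.1).symm)]
  · rw [MonoidHom.range_comp, (MonoidHom.range_eq_top).2 e.symm.surjective,
      ← MonoidHom.range_eq_map, Subgroup.range_subtype]

theorem card_preFixHom_le_of_isConj_left [Finite S] (hlw : LevelwiseClosed (preFixHom A))
    {P' P R : Subgroup S} (h : (preFixHom A).IsConj P' P) (hR : Nat.card R ≤ Nat.card P) :
    Nat.card (preFixHom A P R) ≤ Nat.card (preFixHom A P' R) := by
  obtain ⟨α, hα, hαr⟩ := h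
  refine Nat.card_le_card_of_injective
    (fun χ => ⟨_, hlw.2.2 P' P R α hα χ.1 χ.2 hαr (range_eq_of_mem_preFixHom χ.2 hR)⟩)
    fun χ₁ χ₂ h => Subtype.ext (MonoidHom.ext fun q => ?_)
  obtain ⟨u, rfl⟩ := MonoidHom.codRestrict_surjective hαr hα.2.1 q
  exact DFunLike.congr_fun (congrArg Subtype.val h) u

theorem card_preFixHom_le_of_isConj_right [Finite S] (hlw : LevelwiseClosed (preFixHom A))
    {P Q R : Subgroup S} (h : (preFixHom A).IsConj Q R) (hQ : Nat.card Q ≤ Nat.card P) :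
    Nat.card (preFixHom A P Q) ≤ Nat.card (preFixHom A P R) := by
  obtain ⟨θ, hθ, hθr⟩ := h
  refine Nat.card_le_card_of_injective
    (fun χ => ⟨_, hlw.2.2 P Q R χ.1 χ.2 θ hθ (range_eq_of_mem_preFixHom χ.2 hQ) hθr⟩)
    fun χ₁ χ₂ h => Subtype.ext (MonoidHom.ext fun u => ?_)
  exact congrArg Subtype.val (hθ.1 (DFunLike.congr_fun (congrArg Subtype.val h) u))

end Conjugacy

section Counting

variable {S X : Type*} [Group S] {A : BisetAction S S X} {P : Subgroup S}

theorem card_preFixHom_range [Finite S] (hlw : LevelwiseClosed (preFixHom A)) {φ : P →* S}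
    (hφ : φ ∈ preFixHom A P ⊤) :
    Nat.card (preFixHom A P φ.range) = Nat.card (preFixHom A φ.range φ.range) := by
  have h := isConj_range hφ
  exact le_antisymm
    (card_preFixHom_le_of_isConj_left hlw (isConj_symm hlw h) (card_eq_of_isConj h).ge)
    (card_preFixHom_le_of_isConj_left hlw h le_rfl)

theorem card_preFixHom_eq_of_isConj [Finite S] (hlw : LevelwiseClosed (preFixHom A))
    {Q R : Subgroup S} (h : (preFixHom A).IsConj Q R) (hQ : Nat.card Q = Nat.card P) :
    Nat.card (preFixHom A P Q) = Nat.card (preFixHom A P R) :=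
  le_antisymm (card_preFixHom_le_of_isConj_right hlw h hQ.le)
    (card_preFixHom_le_of_isConj_right hlw (isConj_symm hlw h) (card_eq_of_isConj h ▸ hQ).le)

theorem forall_isConj_range_iff (hA : A.RightFree) (hlw : LevelwiseClosed (preFixHom A))
    {φ : P →* S} (hφ : φ ∈ preFixHom A P ⊤) {p : Subgroup S → Prop} :
    (∀ R, (preFixHom A).IsConj φ.range R → p R) ↔ ∀ z, p (A.fixPairsHom P z).range := by
  refine ⟨fun h z => h _ (isConj_trans hlw (isConj_symm hlw (isConj_range hφ))
    (isConj_range ((A.mem_preFixHom_top_iff hA).2 ⟨_, z.2⟩))), fun h R hR => ?_⟩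
  obtain ⟨ψ, hψ, rfl⟩ := isConj_trans hlw (isConj_range hφ) hR
  obtain ⟨x, hx⟩ := hψ.2.2
  exact h ⟨(ψ, x), hx⟩

theorem finsum_card_fix [Finite S] {c : ℕ}
    (hc : ∀ ψ ∈ preFixHom A P ⊤, Nat.card (A.Fix P ψ) = c) (R : Subgroup S) :
    ∑ᶠ ψ ∈ preFixHom A P R, Nat.card (A.Fix P ψ) = Nat.card (preFixHom A P R) * c := by
  classical
  have := Fintype.ofFinite (preFixHom A P R)
  rw [← finsum_set_coe_eq_finsum_mem, finsum_eq_sum_of_fintype, Nat.card_eq_fintype_card,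
    ← smul_eq_mul, ← Finset.card_univ, ← Finset.sum_const]
  exact Finset.sum_congr rfl fun ψ _ => hc ψ ⟨ψ.2.1, fun _ => trivial, ψ.2.2.2⟩

theorem card_fiber_fixPairsRange [Finite S] [Finite X] (hA : A.RightFree) {c : ℕ}
    (hc : ∀ ψ ∈ preFixHom A P ⊤, Nat.card (A.Fix P ψ) = c) {R : Subgroup S}
    (hR : Nat.card R ≤ Nat.card P) :
    Nat.card (A.fixPairsRange P ⁻¹' {R}) = Nat.card (preFixHom A P R) * c := by
  classical
  have := Fintype.ofFinite (preFixHom A P R)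
  let e : A.fixPairsRange P ⁻¹' {R} ≃ Σ ψ : preFixHom A P R, A.Fix P ψ :=
    { toFun := fun z => ⟨⟨z.1.1.1, A.injective_of_mem_fix hA z.1.2,
        fun u => (z.2 : z.1.1.1.range = R).le ⟨u, rfl⟩, _, z.1.2⟩, ⟨z.1.1.2, z.1.2⟩⟩
      invFun := fun ψx => ⟨⟨(ψx.1.1, ψx.2.1), ψx.2.2⟩, range_eq_of_mem_preFixHom ψx.1.2 hR⟩
      left_inv := fun _ => rfl
      right_inv := fun _ => rfl }
  rw [Nat.card_congr e, Nat.card_sigma, ← finsum_eq_sum_of_fintype,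
    finsum_set_coe_eq_finsum_mem (f := fun ψ => Nat.card (A.Fix P ψ)), finsum_card_fix hc]

variable [Finite S] [Finite X] {p : ℕ}

theorem fullyCentralized_range_iff (hp : p.Prime) (hS : IsPGroup p S) (hA : A.Bifree)
    (hX : ¬ p ∣ Nat.card X / Nat.card S) (hlw : LevelwiseClosed (preFixHom A)) {c : ℕ}
    (hc : ∀ ψ ∈ preFixHom A P ⊤, Nat.card (A.Fix P ψ) = c) {φ : P →* S}
    (hφ : φ ∈ preFixHom A P ⊤) :
    (preFixHom A).FullyCentralized φ.range ↔
      ¬ p ∣ c / Nat.card (Subgroup.centralizer (φ.range : Set S)) := by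
  obtain ⟨x, hx⟩ := hφ.2.2
  have key := forall_card_stabilizer_le_iff_not_dvd hp hS (A.fixPairs_smul_eq_self hA.1)
    (A.fixPairsHom P) (A.not_dvd_card_fixPairs_div hp hS hA.1 hX)
    (fun z => (A.card_fiber_fixPairsHom _).trans
      (hc _ ((A.mem_preFixHom_top_iff hA.2).2 ⟨_, z.2⟩))) ⟨(φ, x), hx⟩
  simp only [stabilizer_hom_eq_centralizer] at key
  rw [Collection.FullyCentralized, forall_isConj_range_iff hA.2 hlw hφ]
  exact key

theorem fullyNormalized_range_iff (hp : p.Prime) (hS : IsPGroup p S) (hA : A.Bifree)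
    (hX : ¬ p ∣ Nat.card X / Nat.card S) (hlw : LevelwiseClosed (preFixHom A)) {c : ℕ}
    (hc : ∀ ψ ∈ preFixHom A P ⊤, Nat.card (A.Fix P ψ) = c) {φ : P →* S}
    (hφ : φ ∈ preFixHom A P ⊤) :
    (preFixHom A).FullyNormalized φ.range ↔
      ¬ p ∣ Nat.card (preFixHom A φ.range φ.range) * c /
        Nat.card (Subgroup.normalizer (φ.range : Set S)) := by
  obtain ⟨x, hx⟩ := hφ.2.2
  have hfiber (z : A.FixPairs P) : Nat.card (A.fixPairsRange P ⁻¹' {A.fixPairsRange P z}) =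
      Nat.card (preFixHom A φ.range φ.range) * c := by
    have hz : (preFixHom A).IsConj φ.range (A.fixPairsRange P z) :=
      (forall_isConj_range_iff hA.2 hlw hφ).1 (fun _ h => h) z
    have hcard : Nat.card φ.range = Nat.card P := (card_eq_of_isConj (isConj_range hφ)).symm
    rw [card_fiber_fixPairsRange hA.2 hc (card_eq_of_isConj hz ▸ hcard).le,
      ← card_preFixHom_eq_of_isConj hlw hz hcard, card_preFixHom_range hlw hφ]
  have key := forall_card_stabilizer_le_iff_not_dvd hp hS (A.fixPairs_smul_eq_self hA.1)
    (A.fixPairsRange P) (A.not_dvd_card_fixPairs_div hp hS hA.1 hX) hfiber ⟨(φ, x), hx⟩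
  simp only [stabilizer_subgroup_eq_normalizer] at key
  rw [Collection.FullyNormalized, forall_isConj_range_iff hA.2 hlw hφ]
  exact key

end Counting

end BisetAction

/-- Let `S` be a finite `p`-group and `X` a finite bifree `(S,S)`-biset
with `|X|/|S|` prime to `p` such that `Pre-Fix(X)` is level-wise closed.  Fix `P ≤ S` and
assume all fixed-point sets `X^{(P,φ)}`, `φ ∈ Hom_{Pre-Fix(X)}(P,S)`, have the same
cardinality.  Then for every `φ ∈ Hom_{Pre-Fix(X)}(P,S)`:
(a) `φ(P)` is fully `Pre-Fix(X)`-centralized iff `p ∤ |X^{(P,φ)}|/|C_S(φ(P))|`, and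
(b) `∑_{ψ ∈ Hom(P,φ(P))} |X^{(P,ψ)}| = |Aut(φ(P))|·|X^{(P,φ)}|`, and `φ(P)` is fully
`Pre-Fix(X)`-normalized iff `p ∤ |Aut(φ(P))|·|X^{(P,φ)}| / |N_S(φ(P))|`. -/
theorem preFix_fullyCentralized_fullyNormalized_criteria
    (p : ℕ) (hp : p.Prime) (S : Type*) [Group S] [Finite S] (hS : IsPGroup p S)
    (X : Type*) [Finite X] (A : BisetAction S S X) (hA : A.Bifree)
    (hcard : ¬ p ∣ Nat.card X / Nat.card S)
    (hlw : LevelwiseClosed (preFixHom A))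
    (P : Subgroup S)
    (hconst : ∀ φ ψ : P →* S, φ ∈ preFixHom A P ⊤ → ψ ∈ preFixHom A P ⊤ →
      Nat.card (A.Fix P φ) = Nat.card (A.Fix P ψ)) :
    ∀ φ : P →* S, φ ∈ preFixHom A P ⊤ →
      ((preFixHom A).FullyCentralized (MonoidHom.range φ) ↔
        ¬ p ∣ Nat.card (A.Fix P φ) /
          Nat.card (Subgroup.centralizer ((MonoidHom.range φ : Subgroup S) : Set S))) ∧
      ((∑ᶠ ψ ∈ preFixHom A P (MonoidHom.range φ), Nat.card (A.Fix P ψ)) =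
        Nat.card (preFixHom A (MonoidHom.range φ) (MonoidHom.range φ)) *
          Nat.card (A.Fix P φ)) ∧
      ((preFixHom A).FullyNormalized (MonoidHom.range φ) ↔
        ¬ p ∣ (Nat.card (preFixHom A (MonoidHom.range φ) (MonoidHom.range φ)) *
            Nat.card (A.Fix P φ)) / Nat.card (Subgroup.normalizer ((MonoidHom.range φ : Subgroup S) : Set S))) := by
  intro φ hφ
  have hc : ∀ ψ ∈ preFixHom A P ⊤, Nat.card (A.Fix P ψ) = Nat.card (A.Fix P φ) :=
    fun ψ hψ => hconst ψ φ hψ hφ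
  exact ⟨BisetAction.fullyCentralized_range_iff hp hS hA hcard hlw hc hφ,
    (BisetAction.finsum_card_fix hc _).trans
      (congrArg (· * _) (BisetAction.card_preFixHom_range hlw hφ)),
    BisetAction.fullyNormalized_range_iff hp hS hA hcard hlw hc hφ⟩
end

section
/- Let p be a prime, S a finite p-group, F a fusion system on S, and Ω a right characteristic biset for F (or a left characteristic biset for F). Then Pre-Fix(Ω) = F; that is, for all subgroups P,Q ≤ S, an injective homomorphism φ: P → Q satisfies Ω^{(P,ι_Q∘φ)} ≠ ∅ if and only if φ ∈ Hom_F(P,Q). Consequently FusFix(Ω) = FusOrb(Ω) = F. -/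
/-! ## Fusion systems -/

section Fusion

variable {S : Type*} [Group S]

/-- A fusion system on a group `S`: for each pair of subgroups `P, Q ≤ S`, a set
`Hom P Q` of injective homomorphisms `P → Q` (represented as homomorphisms `P →* S`
with image contained in `Q`), containing all conjugation maps induced by `S`, closed
under composition, and such that every morphism restricts to an isomorphism onto its
image lying in the fusion system, whose inverse also lies in the fusion system. -/
structure FusionSystem (S : Type*) [Group S] where
  Hom : Collection S
  injective' : ∀ {P Q : Subgroup S} {φ : P →* S}, φ ∈ Hom P Q → Function.Injective φ
  mapsTo' : ∀ {P Q : Subgroup S} {φ : P →* S}, φ ∈ Hom P Q → ∀ u : P, φ u ∈ Q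
  conj_mem' : ∀ (P Q : Subgroup S) (s : S), (∀ u ∈ P, s * u * s⁻¹ ∈ Q) →
    conjHom s P ∈ Hom P Q
  comp_mem' : ∀ {P Q R : Subgroup S} {φ : P →* S} {ψ : Q →* S},
    (hφ : φ ∈ Hom P Q) → (hψ : ψ ∈ Hom Q R) →
    ψ.comp (φ.codRestrict Q (mapsTo' hφ)) ∈ Hom P R
  target_mem' : ∀ {P Q : Subgroup S} {φ : P →* S}, φ ∈ Hom P Q → φ ∈ Hom P φ.range
  inv_mem' : ∀ {P Q : Subgroup S} {φ : P →* S}, φ ∈ Hom P Q →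
    ∃ ψ ∈ Hom φ.range P, ∀ u : P, ψ ⟨φ u, ⟨u, rfl⟩⟩ = u

/-- The subgroup `N_φ = {x ∈ N_S(P) | ∃ y ∈ N_S(φ(P)), ∀ u ∈ P, φ(xux⁻¹) = yφ(u)y⁻¹}`. -/
def Nphi (P : Subgroup S) (φ : P →* S) : Subgroup S where
  carrier := {x | x ∈ Subgroup.normalizer (P : Set S) ∧ ∃ y ∈ Subgroup.normalizer (φ.range : Set S),
    ∀ (u v : S) (hu : u ∈ P) (hv : v ∈ P), v = x * u * x⁻¹ →
      φ ⟨v, hv⟩ = y * φ ⟨u, hu⟩ * y⁻¹}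
  one_mem' := by
    refine ⟨(Subgroup.normalizer (P : Set S)).one_mem, 1, (Subgroup.normalizer (φ.range : Set S)).one_mem, ?_⟩
    intro u v hu hv hveq
    have h1 : (⟨v, hv⟩ : P) = ⟨u, hu⟩ := Subtype.ext (show v = u by rw [hveq]; group)
    rw [h1]; group
  mul_mem' := by
    rintro x₁ x₂ ⟨hx₁, y₁, hy₁, h₁⟩ ⟨hx₂, y₂, hy₂, h₂⟩
    refine ⟨mul_mem hx₁ hx₂, y₁ * y₂, mul_mem hy₁ hy₂, ?_⟩
    intro u v hu hv hveq
    have hw : x₂ * u * x₂⁻¹ ∈ P := (Subgroup.mem_normalizer_iff.mp hx₂ u).mp hu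
    have e1 : φ ⟨v, hv⟩ = y₁ * φ ⟨x₂ * u * x₂⁻¹, hw⟩ * y₁⁻¹ :=
      h₁ _ _ hw hv (by rw [hveq]; group)
    have e2 : φ ⟨x₂ * u * x₂⁻¹, hw⟩ = y₂ * φ ⟨u, hu⟩ * y₂⁻¹ := h₂ _ _ hu hw rfl
    rw [e1, e2]; group
  inv_mem' := by
    rintro x ⟨hx, y, hy, h⟩
    refine ⟨Subgroup.inv_mem _ hx, y⁻¹, Subgroup.inv_mem _ hy, ?_⟩
    intro u v hu hv hveq
    have e1 : φ ⟨u, hu⟩ = y * φ ⟨v, hv⟩ * y⁻¹ :=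
      h _ _ hv hu (by rw [hveq]; group)
    rw [e1]; group

namespace FusionSystem

/-- Axiom I of saturation: every fully normalized subgroup is fully centralized and its
`S`-automorphism group is a Sylow `p`-subgroup of its full automorphism group. -/
def AxiomI (p : ℕ) (F : FusionSystem S) : Prop :=
  ∀ P : Subgroup S, F.Hom.FullyNormalized P →
    F.Hom.FullyCentralized P ∧ F.Hom.AutSIsSylow p P

/-- Axiom I restricted to the full subgroup `S` itself:
`Aut_S(S)` is a Sylow `p`-subgroup of `Aut_F(S)`. -/
def AxiomIS (p : ℕ) (F : FusionSystem S) : Prop :=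
  F.Hom.AutSIsSylow p ⊤

/-- Axiom II of saturation (the extension axiom): every morphism `φ : P → S` of `F`
whose image is fully centralized extends to a morphism of `F` defined on `N_φ`. -/
def AxiomII (F : FusionSystem S) : Prop :=
  ∀ (P : Subgroup S) (φ : P →* S), φ ∈ F.Hom P ⊤ →
    F.Hom.FullyCentralized φ.range →
    ∃ φbar ∈ F.Hom (Nphi P φ) ⊤,
      ∀ (u : S) (hu : u ∈ P) (hu' : u ∈ Nphi P φ), φbar ⟨u, hu'⟩ = φ ⟨u, hu⟩

/-- A fusion system is saturated if it satisfies Axioms I and II. -/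
def Saturated (p : ℕ) (F : FusionSystem S) : Prop :=
  F.AxiomI p ∧ F.AxiomII

end FusionSystem

/-- The closure of a collection: the smallest fusion system containing it.  (The morphism
sets of the closure are the intersections of the morphism sets over all fusion systems
containing the collection.) -/
def closureHom (C : Collection S) : Collection S :=
  fun P Q =>
    {φ | ∀ F : FusionSystem S, (∀ P' Q', C P' Q' ⊆ F.Hom P' Q') → φ ∈ F.Hom P Q}

/-- A level-wise closed collection `C` is saturated at `P ≤ S` if:
(I_P) every fully normalized `Q` conjugate to `P` in `C` is fully centralized and
`Aut_S(Q)` is a Sylow `p`-subgroup of `Aut_C(Q)`; and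
(II_P) every `φ ∈ Hom_C(P,S)` with fully centralized image extends to a morphism
`N_φ → S` in the closure of `C`. -/
def SaturatedAt (p : ℕ) (C : Collection S) (P : Subgroup S) : Prop :=
  (∀ Q : Subgroup S, C.IsConj P Q → C.FullyNormalized Q →
    C.FullyCentralized Q ∧ C.AutSIsSylow p Q) ∧
  (∀ φ ∈ C P ⊤, C.FullyCentralized (MonoidHom.range φ) →
    ∃ φbar ∈ closureHom C (Nphi P φ) ⊤,
      ∀ (u : S) (hu : u ∈ P) (hu' : u ∈ Nphi P φ), φbar ⟨u, hu'⟩ = φ ⟨u, hu⟩)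

end Fusion

/-! ## Stability and characteristic bisets -/

section Char

variable {S X : Type*} [Group S]

/-- `X` is right stable along `φ : P →* S`: the `(P,S)`-biset `X_φ` (right `P`-action
through `φ`) is isomorphic to `X_{ι_P}` (right `P`-action through the inclusion). -/
def RightStableAlong (A : BisetAction S S X) {P : Subgroup S} (φ : P →* S) : Prop :=
  Nonempty (BisetIso (A.restrictRight φ) (A.restrictRight P.subtype))

/-- `X` is left stable along `φ : P →* S`: the `(S,P)`-biset with left `P`-action through
`φ` is isomorphic to the one with left `P`-action through the inclusion. -/
def LeftStableAlong (A : BisetAction S S X) {P : Subgroup S} (φ : P →* S) : Prop :=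
  Nonempty (BisetIso (A.restrictLeft φ) (A.restrictLeft P.subtype))

/-- `X` is right `F`-stable. -/
def RightFStable (F : FusionSystem S) (A : BisetAction S S X) : Prop :=
  ∀ P : Subgroup S, ∀ φ ∈ F.Hom P ⊤, RightStableAlong A φ

/-- `X` is left `F`-stable. -/
def LeftFStable (F : FusionSystem S) (A : BisetAction S S X) : Prop :=
  ∀ P : Subgroup S, ∀ φ ∈ F.Hom P ⊤, LeftStableAlong A φ

/-- `X` is `F`-generated: viewing `X` as an `(S×S)`-set via `(b,a)·x = b·x·a⁻¹`, the
stabilizer of every point is a twisted diagonal `Δ(P,φ)` with `φ` a morphism of `F`. -/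
def FGenerated (F : FusionSystem S) (A : BisetAction S S X) : Prop :=
  ∀ x : X, ∃ (P : Subgroup S) (φ : P →* S), φ ∈ F.Hom P ⊤ ∧
    ∀ b a : S, (A.smul b (A.rmul x a⁻¹) = x ↔ ∃ ha : a ∈ P, φ ⟨a, ha⟩ = b)

/-- A right characteristic biset for `F`: an `F`-generated, right `F`-stable biset whose
number of left `S`-orbits is prime to `p`. -/
def RightCharBiset (p : ℕ) (F : FusionSystem S) (A : BisetAction S S X) : Prop :=
  FGenerated F A ∧ RightFStable F A ∧ ¬ p ∣ Nat.card (BisetAction.leftOrbits A)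

/-- A left characteristic biset for `F`. -/
def LeftCharBiset (p : ℕ) (F : FusionSystem S) (A : BisetAction S S X) : Prop :=
  FGenerated F A ∧ LeftFStable F A ∧ ¬ p ∣ Nat.card (BisetAction.leftOrbits A)

end Char

/-- The orbit-type pre-fusion collection `Pre-Orb(X)`: morphisms from `P` to `Q` are the
injective homomorphisms `φ : P → Q` such that some point of `X` has `(S×S)`-stabilizer
equal to the twisted diagonal `Δ(P,φ)`. -/
def preOrbHom {S X : Type*} [Group S] (A : BisetAction S S X) : Collection S :=
  fun P Q => {φ | Function.Injective φ ∧ (∀ u : P, φ u ∈ Q) ∧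
    ∃ x : X, ∀ b a : S, (A.smul b (A.rmul x a⁻¹) = x ↔ ∃ ha : a ∈ P, φ ⟨a, ha⟩ = b)}

/-!
`F`-generation alone gives `Pre-Fix(Ω) ⊆ F`: a point of `Ω^{(P,φ)}` has a twisted diagonal
`Δ(P',φ')` with `φ' ∈ F` as stabilizer, so `P ≤ P'` and `φ` is a restriction of `φ'`.
Conversely, `S` acts on the left `S`-orbits of `Ω` through the right action; their number is
prime to `p`, so some orbit `S·x₀` is fixed, i.e. `x₀·a ∈ S·x₀` for all `a ∈ S`. Then the
stabilizer of `x₀` is `Δ(S,σ)` for some `σ ∈ Aut_F(S)`, so `x₀ ∈ Ω^{(S,σ)}`. Given `φ ∈ F`,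
write `φ = σ ∘ ψ` (right case) or `σ|_P = θ ∘ φ` (left case) with `ψ, θ ∈ F`; the stability
isomorphism along `ψ`, resp. `θ`, carries `x₀` to a point of `Ω^{(P,φ)}`.
Since `Pre-Orb(Ω) ⊆ Pre-Fix(Ω) = F`, and `Ω` is generated by every fusion system containing
`Pre-Orb(Ω)`, the closures of both collections are `F` as well.
-/

namespace BisetAction

variable {G H X : Type*} [Group G] [Group H] (A : BisetAction G H X)

lemma rmul_eq_smul_iff {x : X} {a : G} {b : H} :
    A.rmul x a = A.smul b x ↔ A.smul b (A.rmul x a⁻¹) = x := by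
  constructor
  · intro h
    rw [← A.smul_rmul, ← h, A.rmul_rmul, mul_inv_cancel, A.rmul_one]
  · intro h
    conv_lhs => rw [← h]
    rw [A.smul_rmul, A.rmul_rmul, inv_mul_cancel, A.rmul_one]

abbrev leftOrbitsMulAction : MulAction G A.leftOrbits where
  smul a := Quotient.map' (fun x => A.rmul x a⁻¹)
    (by rintro x y ⟨h, rfl⟩; exact ⟨h, A.smul_rmul h x a⁻¹⟩)
  one_smul q := by
    induction q using Quotient.inductionOn' with
    | h x => exact congrArg Quotient.mk'' (by dsimp only; rw [inv_one, A.rmul_one])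
  mul_smul a b q := by
    induction q using Quotient.inductionOn' with
    | h x => exact congrArg Quotient.mk'' (by dsimp only; rw [A.rmul_rmul, mul_inv_rev])

lemma exists_rmul_mem_leftOrbit {p : ℕ} [Fact p.Prime] (hG : IsPGroup p G)
    (hcard : ¬ p ∣ Nat.card A.leftOrbits) :
    ∃ x₀ : X, ∀ a : G, ∃ b : H, A.rmul x₀ a = A.smul b x₀ := by
  let := A.leftOrbitsMulAction
  obtain ⟨q, hq⟩ := hG.nonempty_fixed_point_of_prime_not_dvd_card A.leftOrbits hcard
  induction q using Quotient.inductionOn' with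
  | h x₀ =>
    refine ⟨x₀, fun a => ?_⟩
    have hfix : (Quotient.mk'' (A.rmul x₀ a⁻¹⁻¹) : A.leftOrbits) = Quotient.mk'' x₀ := hq a⁻¹
    rw [inv_inv] at hfix
    obtain ⟨b, hb⟩ := Quotient.eq''.mp hfix
    refine ⟨b⁻¹, ?_⟩
    conv_rhs => rw [hb, A.smul_smul, inv_mul_cancel, A.one_smul]

end BisetAction

namespace FusionSystem

variable {S : Type*} [Group S] (F : FusionSystem S) {P Q R : Subgroup S}

lemma subtype_mem (hPQ : P ≤ Q) : P.subtype ∈ F.Hom P Q := by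
  convert F.conj_mem' P Q 1 (fun u hu => by simpa using hPQ hu)
  ext u
  simp [conjHom]

lemma mem_of_comp {φ : P →* S} {ψ : Q →* S} (hφ : φ ∈ F.Hom P Q) (hψ : ψ ∈ F.Hom Q R)
    {χ : P →* S} (hχ : ∀ u, χ u = ψ ⟨φ u, F.mapsTo' hφ u⟩) : χ ∈ F.Hom P R := by
  convert F.comp_mem' hφ hψ
  ext u
  exact hχ u

lemma mem_of_mapsTo {φ : P →* S} (hφ : φ ∈ F.Hom P Q) (hR : ∀ u, φ u ∈ R) :
    φ ∈ F.Hom P R :=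
  F.mem_of_comp (F.target_mem' hφ) (F.subtype_mem (by rintro _ ⟨u, rfl⟩; exact hR u))
    fun _ => rfl

lemma mem_of_restrict {φ' : Q →* S} (hφ' : φ' ∈ F.Hom Q R) (hPQ : P ≤ Q) {φ : P →* S}
    (hφ : ∀ u, φ u = φ' (Subgroup.inclusion hPQ u)) : φ ∈ F.Hom P R :=
  F.mem_of_comp (F.subtype_mem hPQ) hφ' hφ

lemma exists_aut_comp_eq [Finite S] {σ : (⊤ : Subgroup S) →* S} (hσ : σ ∈ F.Hom ⊤ ⊤)
    {φ : P →* S} (hφ : φ ∈ F.Hom P Q) :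
    ∃ ψ ∈ F.Hom P ⊤, ∀ u, σ ⟨ψ u, Subgroup.mem_top _⟩ = φ u := by
  have hsurj : Function.Surjective σ :=
    ((Nat.bijective_iff_injective_and_card σ).mpr ⟨F.injective' hσ, Subgroup.card_top⟩).2
  obtain ⟨σ', hσ', hσ'σ⟩ := F.inv_mem' hσ
  have hφσ : φ ∈ F.Hom P σ.range :=
    F.mem_of_mapsTo hφ fun u => (MonoidHom.range_eq_top.mpr hsurj).symm ▸ Subgroup.mem_top _
  refine ⟨_, F.comp_mem' hφσ hσ', fun u => ?_⟩
  obtain ⟨v, hv⟩ := F.mapsTo' hφσ u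
  have hφu : (⟨φ u, F.mapsTo' hφσ u⟩ : σ.range) = ⟨σ v, v, rfl⟩ := Subtype.ext hv.symm
  change σ ⟨σ' ⟨φ u, _⟩, _⟩ = φ u
  rw [hφu, hσ'σ v, ← hv]

lemma exists_range_comp_eq {σ : P →* S} (hσ : σ ∈ F.Hom P R) {φ : P →* S}
    (hφ : φ ∈ F.Hom P Q) : ∃ θ ∈ F.Hom φ.range R, ∀ u, θ ⟨φ u, u, rfl⟩ = σ u := by
  obtain ⟨φ', hφ', hφ'φ⟩ := F.inv_mem' hφ
  refine ⟨_, F.comp_mem' hφ' hσ, fun u => ?_⟩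
  exact congrArg σ (Subtype.ext (hφ'φ u))

end FusionSystem

section Stability

variable {S X : Type*} [Group S] {A : BisetAction S S X} {P : Subgroup S}
  {σ : (⊤ : Subgroup S) →* S} {x : X}

lemma RightStableAlong.fix_nonempty {ψ : P →* S} (hψ : RightStableAlong A ψ)
    (hx : x ∈ A.Fix ⊤ σ) {φ : P →* S} (hφ : ∀ u, σ ⟨ψ u, Subgroup.mem_top _⟩ = φ u) :
    (A.Fix P φ).Nonempty := by
  obtain ⟨f⟩ := hψ
  refine ⟨f.toEquiv x, fun u => ?_⟩
  calc A.rmul (f.toEquiv x) u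
      = f.toEquiv (A.rmul x (ψ u)) := (f.map_rmul x u).symm
    _ = f.toEquiv (A.smul (φ u) x) := by rw [hx ⟨ψ u, Subgroup.mem_top _⟩, hφ u]
    _ = A.smul (φ u) (f.toEquiv x) := f.map_smul (φ u) x

lemma LeftStableAlong.fix_nonempty {R : Subgroup S} {θ : R →* S} (hθ : LeftStableAlong A θ)
    (hx : x ∈ A.Fix ⊤ σ) {φ : P →* S} (hφR : ∀ u, φ u ∈ R)
    (hφ : ∀ u, θ ⟨φ u, hφR u⟩ = σ ⟨u, Subgroup.mem_top _⟩) : (A.Fix P φ).Nonempty := by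
  obtain ⟨g⟩ := hθ
  refine ⟨g.toEquiv x, fun u => ?_⟩
  calc A.rmul (g.toEquiv x) u
      = g.toEquiv (A.rmul x u) := (g.map_rmul x u).symm
    _ = g.toEquiv (A.smul (θ ⟨φ u, hφR u⟩) x) := by rw [hx ⟨u, Subgroup.mem_top _⟩, hφ u]
    _ = A.smul (φ u) (g.toEquiv x) := g.map_smul ⟨φ u, hφR u⟩ x

end Stability

section Generated

variable {S X : Type*} [Group S] {F F' : FusionSystem S} {A : BisetAction S S X}

lemma FGenerated.mem_hom_of_mem_fix (hG : FGenerated F A) {P Q : Subgroup S} {φ : P →* S}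
    (hφQ : ∀ u, φ u ∈ Q) {x : X} (hx : x ∈ A.Fix P φ) : φ ∈ F.Hom P Q := by
  obtain ⟨P', φ', hφ', hstab⟩ := hG x
  have hΔ : ∀ u : P, ∃ hu : (u : S) ∈ P', φ' ⟨u, hu⟩ = φ u := fun u =>
    (hstab _ _).mp ((A.rmul_eq_smul_iff).mp (hx u))
  exact F.mem_of_mapsTo (F.mem_of_restrict hφ' (fun u hu => (hΔ ⟨u, hu⟩).1)
    fun u => ((hΔ u).2).symm) hφQ

lemma FGenerated.exists_mem_fix_top {p : ℕ} [Fact p.Prime] (hG : FGenerated F A)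
    (hS : IsPGroup p S) (hcard : ¬ p ∣ Nat.card A.leftOrbits) :
    ∃ σ ∈ F.Hom ⊤ ⊤, (A.Fix ⊤ σ).Nonempty := by
  obtain ⟨x₀, hx₀⟩ := A.exists_rmul_mem_leftOrbit hS hcard
  obtain ⟨P, σ, hσ, hstab⟩ := hG x₀
  have hΔ : ∀ a : S, ∃ ha : a ∈ P, A.rmul x₀ a = A.smul (σ ⟨a, ha⟩) x₀ := fun a => by
    obtain ⟨b, hb⟩ := hx₀ a
    obtain ⟨ha, rfl⟩ := (hstab b a).mp ((A.rmul_eq_smul_iff).mp hb)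
    exact ⟨ha, hb⟩
  obtain rfl : P = ⊤ := (Subgroup.eq_top_iff' P).mpr fun a => (hΔ a).1
  exact ⟨σ, F.mem_of_mapsTo hσ fun _ => Subgroup.mem_top _, x₀, fun a => (hΔ a).2⟩

lemma FGenerated.of_preOrbHom_subset (hG : FGenerated F A)
    (hF' : ∀ P Q, preOrbHom A P Q ⊆ F'.Hom P Q) : FGenerated F' A := by
  intro x
  obtain ⟨P, φ, hφ, hstab⟩ := hG x
  exact ⟨P, φ, hF' P ⊤ ⟨F.injective' hφ, fun _ => Subgroup.mem_top _, x, hstab⟩, hstab⟩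

end Generated

section Closure

variable {S X : Type*} [Group S]

lemma preOrbHom_subset_preFixHom (A : BisetAction S S X) (P Q : Subgroup S) :
    preOrbHom A P Q ⊆ preFixHom A P Q := by
  rintro φ ⟨hinj, hφQ, x, hstab⟩
  exact ⟨hinj, hφQ, x, fun u => (A.rmul_eq_smul_iff).mpr ((hstab _ _).mpr ⟨u.2, rfl⟩)⟩

lemma closureHom_subset {C : Collection S} {F : FusionSystem S}
    (hC : ∀ P Q, C P Q ⊆ F.Hom P Q) (P Q : Subgroup S) : closureHom C P Q ⊆ F.Hom P Q :=
  fun _ hφ => hφ F hC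

lemma closureHom_fusionSystemHom (F : FusionSystem S) (P Q : Subgroup S) :
    closureHom F.Hom P Q = F.Hom P Q :=
  (closureHom_subset (fun _ _ => le_rfl) P Q).antisymm fun _ hφ _ hF' => hF' P Q hφ

end Closure

theorem fix_nonempty_of_charBiset {p : ℕ} (hp : p.Prime) {S X : Type*} [Group S] [Finite S]
    (hS : IsPGroup p S) {F : FusionSystem S} {A : BisetAction S S X}
    (h : RightCharBiset p F A ∨ LeftCharBiset p F A) {P Q : Subgroup S} {φ : P →* S}
    (hφ : φ ∈ F.Hom P Q) : (A.Fix P φ).Nonempty := by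
  have : Fact p.Prime := ⟨hp⟩
  obtain ⟨hG, hcard⟩ : FGenerated F A ∧ ¬ p ∣ Nat.card A.leftOrbits :=
    h.elim (fun h => ⟨h.1, h.2.2⟩) (fun h => ⟨h.1, h.2.2⟩)
  obtain ⟨σ, hσ, x, hx⟩ := hG.exists_mem_fix_top hS hcard
  rcases h with ⟨-, hR, -⟩ | ⟨-, hL, -⟩
  · obtain ⟨ψ, hψ, hσψ⟩ := F.exists_aut_comp_eq hσ hφ
    exact (hR P ψ hψ).fix_nonempty hx hσψ
  · have hσP : σ.comp (Subgroup.inclusion (le_top : P ≤ ⊤)) ∈ F.Hom P ⊤ :=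
      F.mem_of_restrict hσ le_top fun _ => rfl
    obtain ⟨θ, hθ, hθφ⟩ := F.exists_range_comp_eq hσP hφ
    exact (hL _ θ hθ).fix_nonempty hx (fun u => ⟨u, rfl⟩) hθφ

theorem preFix_of_charBiset_eq_general
    (p : ℕ) (hp : p.Prime) (S : Type*) [Group S] [Finite S] (hS : IsPGroup p S)
    (F : FusionSystem S) (X : Type*) (A : BisetAction S S X)
    (h : RightCharBiset p F A ∨ LeftCharBiset p F A) :
    (∀ P Q : Subgroup S, preFixHom A P Q = F.Hom P Q) ∧
    (∀ P Q : Subgroup S, closureHom (preFixHom A) P Q = F.Hom P Q) ∧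
    (∀ P Q : Subgroup S, closureHom (preOrbHom A) P Q = F.Hom P Q) := by
  have hG : FGenerated F A := h.elim (·.1) (·.1)
  have hpreFix : preFixHom A = F.Hom := by
    ext P Q φ
    refine ⟨fun ⟨_, hφQ, _, hx⟩ => hG.mem_hom_of_mem_fix hφQ hx, fun hφ => ?_⟩
    exact ⟨F.injective' hφ, F.mapsTo' hφ, fix_nonempty_of_charBiset hp hS h hφ⟩
  refine ⟨fun P Q => hpreFix ▸ rfl, fun P Q => hpreFix ▸ closureHom_fusionSystemHom F P Q, fun P Q => ?_⟩
  refine (closureHom_subset (fun P Q => hpreFix ▸ preOrbHom_subset_preFixHom A P Q) P Q).antisymm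
    fun φ hφ F' hF' => ?_
  obtain ⟨x, hx⟩ := fix_nonempty_of_charBiset hp hS h hφ
  exact (hG.of_preOrbHom_subset hF').mem_hom_of_mem_fix (F.mapsTo' hφ) hx

/-- Let `Ω` be a right (or left) characteristic biset for a fusion
system `F` on a finite `p`-group `S`.  Then `Pre-Fix(Ω) = F`; consequently the closures
`FusFix(Ω)` and `FusOrb(Ω)` of `Pre-Fix(Ω)` and `Pre-Orb(Ω)` also equal `F`. -/
theorem preFix_of_charBiset_eq
    (p : ℕ) (hp : p.Prime) (S : Type*) [Group S] [Finite S] (hS : IsPGroup p S)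
    (F : FusionSystem S) (X : Type*) [Finite X] (A : BisetAction S S X)
    (h : RightCharBiset p F A ∨ LeftCharBiset p F A) :
    (∀ P Q : Subgroup S, preFixHom A P Q = F.Hom P Q) ∧
    (∀ P Q : Subgroup S, closureHom (preFixHom A) P Q = F.Hom P Q) ∧
    (∀ P Q : Subgroup S, closureHom (preOrbHom A) P Q = F.Hom P Q) :=
  preFix_of_charBiset_eq_general p hp S hS F X A h
end

section
/- Let S be a finite group, X and Y finite (S,S)-bisets, P ≤ S a subgroup, ψ: P → S a homomorphism, and φ: P → S an injective homomorphism. Let Z_a denote X×Y with the (S, S×S)-biset structure (b₁,b₂)·(x,y)·a = (b₁·x·a, b₂·y·a), and Z_b denote X×Y with the structure (b₁,b₂)·(x,y)·a = (b₁·x·b₂⁻¹, b₂·y·a). Let ψ×φ: P → S×S be u ↦ (ψ(u),φ(u)). Then |Z_a^{(P,ψ×φ)}| = |X^{(P,ψ)}| · |Y^{(P,φ)}| and |Z_b^{(P,ψ×φ)}| = |X^{(φ(P), ψ∘φ⁻¹)}| · |Y^{(P,φ)}|, where φ⁻¹: φ(P) → P is the inverse of the isomorphism induced by φ. -/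
/-! ### The standard bisets `[L,ψ] = H ×_{(L,ψ)} G` -/

section Std

variable {G H : Type*} [Group G] [Group H]

/-- The setoid on `H × G` generated by `(x·ψ(l), y) ∼ (x, l·y)` for `l ∈ L`. -/
def pairSetoid (L : Subgroup G) (ψ : L →* H) : Setoid (H × G) where
  r a b := ∃ l : L, b.1 = a.1 * ψ l ∧ b.2 = (l : G)⁻¹ * a.2
  iseqv := by
    refine ⟨fun a => ⟨1, by simp⟩, ?_, ?_⟩
    · rintro ⟨a1, a2⟩ ⟨b1, b2⟩ ⟨l, h1, h2⟩
      dsimp only at h1 h2 ⊢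
      refine ⟨l⁻¹, ?_, ?_⟩
      · rw [map_inv, h1, mul_assoc, mul_inv_cancel, mul_one]
      · rw [h2]; simp [mul_assoc]
    · rintro ⟨a1, a2⟩ ⟨b1, b2⟩ ⟨c1, c2⟩ ⟨l, h1, h2⟩ ⟨m, h3, h4⟩
      dsimp only at h1 h2 h3 h4 ⊢
      refine ⟨l * m, ?_, ?_⟩
      · rw [map_mul, h3, h1, mul_assoc]
      · rw [h4, h2]
        simp only [Subgroup.coe_mul, mul_inv_rev, mul_assoc]

/-- The biset `[L,ψ] = H ×_{(L,ψ)} G`: the quotient of `H × G` by the relation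
`(x·ψ(l), y) ∼ (x, l·y)` for `l ∈ L`. -/
def stdBiset (L : Subgroup G) (ψ : L →* H) : Type _ := Quotient (pairSetoid L ψ)

/-- The `(G,H)`-biset structure on `[L,ψ]`: `h·[x,y]·g = [h·x, y·g]`. -/
def stdBisetAction (L : Subgroup G) (ψ : L →* H) : BisetAction G H (stdBiset L ψ) where
  smul h := Quotient.map (fun a => (h * a.1, a.2)) (by
    rintro ⟨a1, a2⟩ ⟨b1, b2⟩ ⟨l, h1, h2⟩
    dsimp only at h1 h2 ⊢
    exact ⟨l, by rw [h1, mul_assoc], h2⟩)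
  rmul x g := Quotient.map (fun a => (a.1, a.2 * g)) (by
    rintro ⟨a1, a2⟩ ⟨b1, b2⟩ ⟨l, h1, h2⟩
    dsimp only at h1 h2 ⊢
    exact ⟨l, h1, by rw [h2, mul_assoc]⟩) x
  one_smul x := by
    refine Quotient.inductionOn x (fun a => ?_)
    exact congrArg (Quotient.mk _) (by dsimp only; rw [one_mul])
  mul_smul h₁ h₂ x := by
    refine Quotient.inductionOn x (fun a => ?_)
    exact congrArg (Quotient.mk _) (by dsimp only; rw [mul_assoc])
  rmul_one x := by
    refine Quotient.inductionOn x (fun a => ?_)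
    exact congrArg (Quotient.mk _) (by dsimp only; rw [mul_one])
  rmul_mul x g₁ g₂ := by
    refine Quotient.inductionOn x (fun a => ?_)
    exact congrArg (Quotient.mk _) (by dsimp only; rw [mul_assoc])
  smul_rmul h x g := by
    refine Quotient.inductionOn x (fun a => ?_)
    rfl

end Std

/-! ### Tensor product (composition) of bisets -/

section Tensor

variable {G H K : Type*} [Group G] [Group H] [Group K] {X Y : Type*}

/-- The setoid on `Y × X` defining `Y ×_H X`, for `X` a `(G,H)`-biset and `Y` an
`(H,K)`-biset: `(y·h, x) ∼ (y, h·x)`. -/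
def tensorSetoid (A : BisetAction G H X) (B : BisetAction H K Y) : Setoid (Y × X) where
  r a b := ∃ h : H, b.1 = B.rmul a.1 h ∧ b.2 = A.smul h⁻¹ a.2
  iseqv := by
    refine ⟨fun a => ⟨1, by rw [B.rmul_one], by rw [inv_one, A.one_smul]⟩, ?_, ?_⟩
    · rintro ⟨y, x⟩ ⟨y', x'⟩ ⟨h, h1, h2⟩
      dsimp only at h1 h2 ⊢
      refine ⟨h⁻¹, ?_, ?_⟩
      · rw [h1, B.rmul_rmul, mul_inv_cancel, B.rmul_one]
      · rw [h2, A.smul_smul, inv_inv, mul_inv_cancel, A.one_smul]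
    · rintro ⟨y, x⟩ ⟨y', x'⟩ ⟨y'', x''⟩ ⟨h, h1, h2⟩ ⟨h', h3, h4⟩
      dsimp only at h1 h2 h3 h4 ⊢
      refine ⟨h * h', ?_, ?_⟩
      · rw [h3, h1, B.rmul_rmul]
      · rw [h4, h2, A.smul_smul, mul_inv_rev]

/-- The composite biset `Y ×_H X`, a `(G,K)`-biset. -/
def tensorBiset (A : BisetAction G H X) (B : BisetAction H K Y) : Type _ :=
  Quotient (tensorSetoid A B)

/-- The `(G,K)`-biset structure on `Y ×_H X`. -/
def tensorAction (A : BisetAction G H X) (B : BisetAction H K Y) :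
    BisetAction G K (tensorBiset A B) where
  smul k := Quotient.map (fun a => (B.smul k a.1, a.2)) (by
    rintro ⟨y, x⟩ ⟨y', x'⟩ ⟨h, h1, h2⟩
    dsimp only at h1 h2 ⊢
    exact ⟨h, by rw [h1, B.smul_rmul], h2⟩)
  rmul z g := Quotient.map (fun a => (a.1, A.rmul a.2 g)) (by
    rintro ⟨y, x⟩ ⟨y', x'⟩ ⟨h, h1, h2⟩
    dsimp only at h1 h2 ⊢
    exact ⟨h, h1, by rw [h2, A.smul_rmul]⟩) z
  one_smul z := by
    refine Quotient.inductionOn z (fun a => ?_)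
    exact congrArg (Quotient.mk _) (by dsimp only; rw [B.one_smul])
  mul_smul k₁ k₂ z := by
    refine Quotient.inductionOn z (fun a => ?_)
    exact congrArg (Quotient.mk _) (by dsimp only; rw [B.mul_smul])
  rmul_one z := by
    refine Quotient.inductionOn z (fun a => ?_)
    exact congrArg (Quotient.mk _) (by dsimp only; rw [A.rmul_one])
  rmul_mul z g₁ g₂ := by
    refine Quotient.inductionOn z (fun a => ?_)
    exact congrArg (Quotient.mk _) (by dsimp only; rw [A.rmul_mul])
  smul_rmul k z g := by
    refine Quotient.inductionOn z (fun a => ?_)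
    rfl

end Tensor

/-! ### Products of bisets -/

section Prod

variable {G₁ G₂ H₁ H₂ S : Type*} [Group G₁] [Group G₂] [Group H₁] [Group H₂] [Group S]
variable {X Y : Type*}

/-- The product of a `(G₁,H₁)`-biset and a `(G₂,H₂)`-biset, a
`(G₁ × G₂, H₁ × H₂)`-biset with coordinatewise actions. -/
def prodAction (A : BisetAction G₁ H₁ X) (B : BisetAction G₂ H₂ Y) :
    BisetAction (G₁ × G₂) (H₁ × H₂) (X × Y) where
  smul h z := (A.smul h.1 z.1, B.smul h.2 z.2)
  rmul z g := (A.rmul z.1 g.1, B.rmul z.2 g.2)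
  one_smul z := by simp [A.one_smul, B.one_smul]
  mul_smul h₁ h₂ z := by simp [A.mul_smul, B.mul_smul]
  rmul_one z := by simp [A.rmul_one, B.rmul_one]
  rmul_mul z g₁ g₂ := by simp [A.rmul_mul, B.rmul_mul]
  smul_rmul h z g := by simp [A.smul_rmul, B.smul_rmul]

/-- `X × Y` endowed with the `(S, H₁ × H₂)`-biset structure
`(b₁,b₂)·(x,y)·a = (b₁·x·a, b₂·y·a)` (the right `S`-action is diagonal). -/
def diagProdAction (A : BisetAction S H₁ X) (B : BisetAction S H₂ Y) :
    BisetAction S (H₁ × H₂) (X × Y) where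
  smul h z := (A.smul h.1 z.1, B.smul h.2 z.2)
  rmul z a := (A.rmul z.1 a, B.rmul z.2 a)
  one_smul z := by simp [A.one_smul, B.one_smul]
  mul_smul h₁ h₂ z := by simp [A.mul_smul, B.mul_smul]
  rmul_one z := by simp [A.rmul_one, B.rmul_one]
  rmul_mul z g₁ g₂ := by simp [A.rmul_mul, B.rmul_mul]
  smul_rmul h z g := by simp [A.smul_rmul, B.smul_rmul]

/-- `X × Y` endowed with the `(S, S × S)`-biset structure
`(b₁,b₂)·(x,y)·a = (b₁·x·b₂⁻¹, b₂·y·a)`, for `(S,S)`-bisets `X` and `Y`. -/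
def twistProdAction (A : BisetAction S S X) (B : BisetAction S S Y) :
    BisetAction S (S × S) (X × Y) where
  smul b z := (A.rmul (A.smul b.1 z.1) b.2⁻¹, B.smul b.2 z.2)
  rmul z a := (z.1, B.rmul z.2 a)
  one_smul z := by simp [A.one_smul, B.one_smul, A.rmul_one]
  mul_smul b c z := by
    simp only [Prod.fst_mul, Prod.snd_mul, Prod.mk.injEq, mul_inv_rev]
    refine ⟨?_, B.mul_smul _ _ _⟩
    rw [A.mul_smul, ← A.rmul_rmul, A.smul_rmul]
  rmul_one z := by simp [B.rmul_one]
  rmul_mul z g₁ g₂ := by simp [B.rmul_mul]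
  smul_rmul h z g := by simp [B.smul_rmul]

end Prod

/-! Both fixed-point conditions split coordinatewise. For `Z_b` the first coordinate must
satisfy `x = ψ(u)·x·φ(u)⁻¹`, i.e. `x·φ(u) = ψ(u)·x` for all `u ∈ P`, which says exactly that
`x` is fixed by `(φ(P), ψ∘φ⁻¹)`. -/

namespace BisetAction

variable {G H : Type*} [Group G] [Group H] {X : Type*}

lemma eq_rmul_inv_iff (A : BisetAction G H X) (x y : X) (g : G) :
    x = A.rmul y g⁻¹ ↔ A.rmul x g = y := by
  constructor
  · rintro rfl
    rw [A.rmul_rmul, inv_mul_cancel, A.rmul_one]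
  · rintro rfl
    rw [A.rmul_rmul, mul_inv_cancel, A.rmul_one]

lemma mem_fix_range_iff (A : BisetAction G H X) {K : Type*} [Group K] {φ : K →* G}
    {ψ : K →* H} {χ : φ.range →* H} (hχ : ∀ u : K, χ ⟨φ u, ⟨u, rfl⟩⟩ = ψ u) (x : X) :
    x ∈ A.Fix φ.range χ ↔ ∀ u : K, A.rmul x (φ u) = A.smul (ψ u) x := by
  refine ⟨fun hx u => hχ u ▸ hx ⟨φ u, ⟨u, rfl⟩⟩, ?_⟩
  rintro hx ⟨_, u, rfl⟩
  exact (hχ u).symm ▸ hx u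

end BisetAction

section Prod

variable {S H₁ H₂ : Type*} [Group S] [Group H₁] [Group H₂] {X Y : Type*}

lemma fix_diagProdAction (A : BisetAction S H₁ X) (B : BisetAction S H₂ Y)
    (P : Subgroup S) (ψ : P →* H₁) (φ : P →* H₂) :
    (diagProdAction A B).Fix P (ψ.prod φ) = A.Fix P ψ ×ˢ B.Fix P φ := by
  ext z
  exact (forall_congr' fun u => Prod.ext_iff).trans forall_and

lemma fix_twistProdAction (A : BisetAction S S X) (B : BisetAction S S Y)
    (P : Subgroup S) (ψ φ : P →* S) (χ : φ.range →* S)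
    (hχ : ∀ u : P, χ ⟨φ u, ⟨u, rfl⟩⟩ = ψ u) :
    (twistProdAction A B).Fix P (ψ.prod φ) = A.Fix φ.range χ ×ˢ B.Fix P φ := by
  ext z
  refine ((forall_congr' fun u => Prod.ext_iff).trans forall_and).trans (and_congr ?_ Iff.rfl)
  rw [A.mem_fix_range_iff hχ]
  exact forall_congr' fun u => A.eq_rmul_inv_iff _ _ _

end Prod

theorem card_fix_prod_bisets_general
    (S : Type*) [Group S] (X Y : Type*)
    (A : BisetAction S S X) (B : BisetAction S S Y)
    (P : Subgroup S) (ψ φ : P →* S)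
    (χ : φ.range →* S) (hχ : ∀ u : P, χ ⟨φ u, ⟨u, rfl⟩⟩ = ψ u) :
    Nat.card ((diagProdAction A B).Fix P (ψ.prod φ)) =
      Nat.card (A.Fix P ψ) * Nat.card (B.Fix P φ) ∧
    Nat.card ((twistProdAction A B).Fix P (ψ.prod φ)) =
      Nat.card (A.Fix φ.range χ) * Nat.card (B.Fix P φ) := by
  rw [fix_diagProdAction, fix_twistProdAction A B P ψ φ χ hχ]
  simp only [Nat.card_coe_set_eq, Set.ncard_prod, and_self]

/-- Let `S` be a finite group, `X Y` finite `(S,S)`-bisets, `P ≤ S`,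
`ψ : P →* S` a homomorphism and `φ : P →* S` an injective homomorphism.  Write `Z_a` for
`X×Y` with the `(S,S×S)`-actions `(b₁,b₂)·(x,y)·a = (b₁·x·a, b₂·y·a)` and `Z_b` for
`X×Y` with `(b₁,b₂)·(x,y)·a = (b₁·x·b₂⁻¹, b₂·y·a)`.  Then
`|Z_a^{(P,ψ×φ)}| = |X^{(P,ψ)}|·|Y^{(P,φ)}|` and
`|Z_b^{(P,ψ×φ)}| = |X^{(φ(P),ψ∘φ⁻¹)}|·|Y^{(P,φ)}|`, where `ψ∘φ⁻¹ : φ.range →* S` is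
the homomorphism `χ` characterized by `χ(φ(u)) = ψ(u)` for `u ∈ P`. -/
theorem card_fix_prod_bisets
    (S : Type*) [Group S] [Finite S] (X Y : Type*) [Finite X] [Finite Y]
    (A : BisetAction S S X) (B : BisetAction S S Y)
    (P : Subgroup S) (ψ φ : P →* S) (hφ : Function.Injective φ)
    (χ : φ.range →* S) (hχ : ∀ u : P, χ ⟨φ u, ⟨u, rfl⟩⟩ = ψ u) :
    Nat.card ((diagProdAction A B).Fix P (ψ.prod φ)) =
      Nat.card (A.Fix P ψ) * Nat.card (B.Fix P φ) ∧
    Nat.card ((twistProdAction A B).Fix P (ψ.prod φ)) =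
      Nat.card (A.Fix φ.range χ) * Nat.card (B.Fix P φ) :=
  card_fix_prod_bisets_general S X Y A B P ψ φ χ hχ
end
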